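/- Validity of the permutation p-value: if T₀, T₁, ..., T_B are exchangeable and almost surely pairwise distinct, and p := (1 + Σ_{j=1}^B 1[T₀ ≤ T_j])/(B+1), then P(p ≤ α) ≤ α for every α ∈ (0,1). -/

import Mathlib

open MeasureTheory Finset

/-!
For a vector `v` with distinct entries, the counts `rankCount v i = #{j ≠ i | v i ≤ v j}` are
pairwise distinct, so at most `k` coordinates have count below `k`. Integrating, the events
`rankCount (T · ω) i < k` have total probability at most `k`; by exchangeability they all have the
same probability, hence each has probability at most `k / (B + 1)`. Since `1 + rankCount` is a
natural number, `p ≤ α` is the event `rankCount (T · ω) 0 < ⌊α (B + 1)⌋₊`.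
-/

section Rank

variable {ι α : Type*} [Fintype ι] [DecidableEq ι] [LinearOrder α]

def rankCount (v : ι → α) (i : ι) : ℕ := #{j | j ≠ i ∧ v i ≤ v j}

lemma rankCount_comp_perm (v : ι → α) (σ : Equiv.Perm ι) (i : ι) :
    rankCount (v ∘ σ) i = rankCount v (σ i) :=
  card_equiv σ fun j => by simp

lemma rankCount_lt_rankCount_of_lt {v : ι → α} {i j : ι} (hij : v i < v j) :
    rankCount v j < rankCount v i := by
  refine card_lt_card <| (ssubset_iff_of_subset fun l hl => ?_).2 ⟨j, ?_, by simp⟩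
  · simp only [mem_filter, mem_univ, true_and] at hl ⊢
    exact ⟨by rintro rfl; exact hl.2.not_gt hij, hij.le.trans hl.2⟩
  · simp [hij.le, ne_of_apply_ne v hij.ne']

lemma rankCount_injective {v : ι → α} (hv : Function.Injective v) :
    Function.Injective (rankCount v) := by
  intro i j h
  by_contra hij
  rcases (hv.ne hij).lt_or_gt with hlt | hlt
  · exact (rankCount_lt_rankCount_of_lt hlt).ne' h
  · exact (rankCount_lt_rankCount_of_lt hlt).ne h

lemma card_rankCount_lt_le {v : ι → α} (hv : Function.Injective v) (k : ℕ) :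
    #{i | rankCount v i < k} ≤ k := by
  simpa using card_le_card_of_injOn (rankCount v) (t := range k) (fun i hi => by simpa using hi)
    (rankCount_injective hv).injOn

end Rank

lemma ae_injective_of_measure_eq_zero {ι α Ω : Type*} [Finite ι] [MeasurableSpace Ω]
    {μ : Measure Ω} {X : ι → Ω → α}
    (hdistinct : ∀ i j, i ≠ j → μ {ω | X i ω = X j ω} = 0) :
    ∀ᵐ ω ∂μ, Function.Injective (X · ω) := by
  have h : ∀ᵐ ω ∂μ, ∀ i j, X i ω = X j ω → i = j := by
    refine ae_all_iff.2 fun i => ae_all_iff.2 fun j => ?_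
    by_cases hij : i = j
    · exact .of_forall fun _ _ => hij
    · simpa [hij] using measure_eq_zero_iff_ae_notMem.1 (hdistinct i j hij)
  filter_upwards [h] with ω hω i j using hω i j

section Exchangeable

variable {ι α Ω : Type*} [Fintype ι] [DecidableEq ι] [LinearOrder α] [MeasurableSpace α]
  [TopologicalSpace α] [OpensMeasurableSpace α] [OrderClosedTopology α]
  [SecondCountableTopology α] [MeasurableSpace Ω] {μ : Measure Ω} {X : ι → Ω → α}

lemma measurable_rankCount (i : ι) : Measurable fun v : ι → α => rankCount v i := by
  simp only [rankCount, card_filter]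
  exact measurable_sum _ fun j _ => Measurable.ite ((MeasurableSet.const _).inter
    (measurableSet_le (measurable_pi_apply i) (measurable_pi_apply j)))
    measurable_const measurable_const

lemma measure_rankCount_lt_eq (hX : ∀ i, Measurable (X i))
    (hexch : ∀ σ : Equiv.Perm ι, μ.map (fun ω i => X (σ i) ω) = μ.map (fun ω i => X i ω))
    (i j : ι) (k : ℕ) :
    μ {ω | rankCount (X · ω) j < k} = μ {ω | rankCount (X · ω) i < k} := by
  have hS : MeasurableSet {v : ι → α | rankCount v i < k} :=
    measurable_rankCount i measurableSet_Iio
  have hσ : Equiv.swap i j i = j := Equiv.swap_apply_left i j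
  calc μ {ω | rankCount (X · ω) j < k}
      = μ {ω | rankCount (fun l => X (Equiv.swap i j l) ω) i < k} := by
        congr 1
        ext ω
        show rankCount (X · ω) j < k ↔ rankCount ((X · ω) ∘ Equiv.swap i j) i < k
        rw [rankCount_comp_perm, hσ]
    _ = μ.map (fun ω l => X (Equiv.swap i j l) ω) {v | rankCount v i < k} :=
        (Measure.map_apply (measurable_pi_lambda _ fun l => hX _) hS).symm
    _ = μ {ω | rankCount (X · ω) i < k} := by
        rw [hexch, Measure.map_apply (measurable_pi_lambda _ hX) hS]
        rfl

lemma sum_measure_rankCount_lt_le (hX : ∀ i, Measurable (X i))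
    (hdistinct : ∀ i j, i ≠ j → μ {ω | X i ω = X j ω} = 0) (k : ℕ) :
    ∑ i, μ {ω | rankCount (X · ω) i < k} ≤ k * μ Set.univ := by
  have hA : ∀ i, MeasurableSet {ω | rankCount (X · ω) i < k} := fun i =>
    (measurable_rankCount i).comp (measurable_pi_lambda _ hX) measurableSet_Iio
  calc ∑ i, μ {ω | rankCount (X · ω) i < k}
      = ∫⁻ ω, ∑ i, {ω | rankCount (X · ω) i < k}.indicator 1 ω ∂μ := by
        rw [lintegral_finsetSum _ fun i _ => measurable_one.indicator (hA i)]
        simp_rw [lintegral_indicator_one (hA _)]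
    _ ≤ ∫⁻ _, (k : ENNReal) ∂μ := by
        refine lintegral_mono_ae ?_
        filter_upwards [ae_injective_of_measure_eq_zero hdistinct] with ω hω
        simp only [Set.indicator_apply, Pi.one_apply, sum_boole]
        exact_mod_cast card_rankCount_lt_le hω k
    _ = k * μ Set.univ := lintegral_const _

lemma card_mul_measure_rankCount_lt_le (hX : ∀ i, Measurable (X i))
    (hexch : ∀ σ : Equiv.Perm ι, μ.map (fun ω i => X (σ i) ω) = μ.map (fun ω i => X i ω))
    (hdistinct : ∀ i j, i ≠ j → μ {ω | X i ω = X j ω} = 0) (i : ι) (k : ℕ) :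
    Fintype.card ι * μ {ω | rankCount (X · ω) i < k} ≤ k * μ Set.univ :=
  calc Fintype.card ι * μ {ω | rankCount (X · ω) i < k}
      = ∑ j, μ {ω | rankCount (X · ω) j < k} := by
        simp [measure_rankCount_lt_eq hX hexch i]
    _ ≤ k * μ Set.univ := sum_measure_rankCount_lt_le hX hdistinct k

end Exchangeable

/-- Validity of the permutation p-value: if `T 0, T 1, ..., T B` are exchangeable and almost
surely pairwise distinct, and `p = (1 + Σ_{j=1}^B 1[T 0 ≤ T j])/(B+1)`, then `P(p ≤ α) ≤ α`
for every `α ∈ (0,1)`. -/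
theorem permutation_pvalue_valid {Ω : Type*} [MeasurableSpace Ω] (μ : Measure Ω)
    [IsProbabilityMeasure μ] (B : ℕ) (T : Fin (B + 1) → Ω → ℝ)
    (hmeas : ∀ i, Measurable (T i))
    (hexch : ∀ σ : Equiv.Perm (Fin (B + 1)),
      μ.map (fun ω i => T (σ i) ω) = μ.map (fun ω i => T i ω))
    (hdistinct : ∀ i j, i ≠ j → μ {ω | T i ω = T j ω} = 0)
    (p : Ω → ℝ)
    (hp : ∀ ω, p ω =
      (1 + ((Finset.univ.filter (fun j : Fin (B + 1) => j ≠ 0 ∧ T 0 ω ≤ T j ω)).card : ℝ))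
        / (B + 1)) :
    ∀ α ∈ Set.Ioo (0 : ℝ) 1, μ {ω | p ω ≤ α} ≤ ENNReal.ofReal α := by
  rintro α ⟨hα0, -⟩
  set k := ⌊α * (B + 1)⌋₊
  have hset : {ω | p ω ≤ α} = {ω | rankCount (T · ω) 0 < k} := by
    ext ω
    rw [Set.mem_ofPred_eq, Set.mem_ofPred_eq, hp, div_le_iff₀ (by positivity),
      Nat.lt_iff_add_one_le, Nat.le_floor_iff (by positivity), add_comm]
    push_cast
    rfl
  have hk : (k : ENNReal) ≤ (B + 1) * ENNReal.ofReal α :=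
    calc (k : ENNReal) = ENNReal.ofReal k := (ENNReal.ofReal_natCast k).symm
      _ ≤ ENNReal.ofReal ((B + 1) * α) :=
        ENNReal.ofReal_le_ofReal (mul_comm α _ ▸ Nat.floor_le (by positivity))
      _ = (B + 1) * ENNReal.ofReal α := by
        rw [ENNReal.ofReal_mul (by positivity)]
        norm_cast
  have hbound := card_mul_measure_rankCount_lt_le hmeas hexch hdistinct 0 k
  rw [Fintype.card_fin, measure_univ, mul_one] at hbound
  push_cast at hbound
  rw [hset]
  exact (ENNReal.mul_le_mul_iff_right (by positivity) (by simp)).1 (hbound.trans hk)
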